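/- arXiv:2410.06332 — 3 statements merged into one kernel-verified Lean document; each statement's English description precedes it below -/
import Mathlib

section
/- If the subgraph of the Boolean hypercube graph induced by the models of a Boolean function f has m connected components, then any BNN representation (P,N) of f contains at least one positive prototype in each such connected component, hence |P| >= m. -/
/-!
Let `a` be a model and `b ∈ P` a positive prototype strictly closer to `a` than every negative
prototype. Walk from `a` to `b` along a shortest path of the hypercube. Moving one step towards
`b` lowers the distance to `b` by one and the distance to any negative prototype by at most one,
so `b` stays strictly closer than every negative prototype; hence every point of the walk is
classified positive, i.e. is a model, and `b` lies in the component of `a`. Since the prototypes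
of `P` are themselves models, `P` surjects onto the components.
-/

/-- (P,N) is a Boolean Nearest Neighbor representation of f. -/
def IsBNN {n : ℕ} (f : (Fin n → Bool) → Bool)
    (P N : Finset (Fin n → Bool)) : Prop :=
  Disjoint P N ∧
  (∀ a, f a = true → ∃ b ∈ P, ∀ c ∈ N, hammingDist a b < hammingDist a c) ∧
  (∀ a, f a = false → ∃ b ∈ N, ∀ c ∈ P, hammingDist a b < hammingDist a c)

open Finset Function

section Hamming

variable {ι : Type*} [Fintype ι] [DecidableEq ι] {β : ι → Type*} [∀ i, DecidableEq (β i)]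

theorem hammingDist_update_eq_one (x : ∀ i, β i) {i : ι} {v : β i} (h : x i ≠ v) :
    hammingDist x (update x i v) = 1 := by
  rw [hammingDist, card_eq_one]
  refine ⟨i, ?_⟩
  ext j
  rcases eq_or_ne j i with rfl | hj <;> simp [*]

theorem hammingDist_update_add_one {x y : ∀ i, β i} {i : ι} (h : x i ≠ y i) :
    hammingDist (update x i (y i)) y + 1 = hammingDist x y := by
  have hsupport : ({j | update x i (y i) j ≠ y j} : Finset ι) =
      ({j | x j ≠ y j} : Finset ι).erase i := by
    ext j
    rcases eq_or_ne j i with rfl | hj <;> simp [*]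
  rw [hammingDist, hammingDist, hsupport, card_erase_add_one (by simpa using h)]

theorem exists_hammingDist_eq_one_of_ne {x y : ∀ i, β i} (h : x ≠ y) :
    ∃ z, hammingDist x z = 1 ∧ hammingDist z y + 1 = hammingDist x y :=
  let ⟨i, hi⟩ := Function.ne_iff.1 h
  ⟨update x i (y i), hammingDist_update_eq_one x hi, hammingDist_update_add_one hi⟩

omit [DecidableEq ι] in
theorem hammingDist_lt_of_add_eq {x y z w : ∀ i, β i}
    (hz : hammingDist x z + hammingDist z y = hammingDist x y)
    (h : hammingDist x y < hammingDist x w) : hammingDist z y < hammingDist z w := by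
  have := hammingDist_triangle x z w
  omega

end Hamming

namespace IsBNN

variable {n : ℕ} {f : (Fin n → Bool) → Bool} {P N : Finset (Fin n → Bool)}

theorem eq_true_of_forall_lt (hPN : IsBNN f P N) {a b : Fin n → Bool} (hb : b ∈ P)
    (hN : ∀ c ∈ N, hammingDist a b < hammingDist a c) : f a = true := by
  by_contra hfa
  obtain ⟨c, hc, hP⟩ := hPN.2.2 a (by simpa using hfa)
  exact lt_asymm (hN c hc) (hP b hb)

theorem eq_true_of_mem_pos (hPN : IsBNN f P N) {p : Fin n → Bool} (hp : p ∈ P) : f p = true :=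
  hPN.eq_true_of_forall_lt hp fun c hc => by
    rw [hammingDist_self, hammingDist_pos]
    rintro rfl
    exact disjoint_left.1 hPN.1 hp hc

theorem reachable_of_forall_lt (hPN : IsBNN f P N) {G : SimpleGraph {x // f x = true}}
    (hG : ∀ a b, G.Adj a b ↔ hammingDist a.1 b.1 = 1) {a b : Fin n → Bool} (ha : f a = true)
    (hb : b ∈ P) (hN : ∀ c ∈ N, hammingDist a b < hammingDist a c) :
    G.Reachable ⟨a, ha⟩ ⟨b, hPN.eq_true_of_mem_pos hb⟩ := by
  induction hd : hammingDist a b generalizing a with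
  | zero =>
    obtain rfl := eq_of_hammingDist_eq_zero hd
    rfl
  | succ k ih =>
    have hab : a ≠ b := hammingDist_ne_zero.1 (by omega)
    obtain ⟨z, haz, hzb⟩ := exists_hammingDist_eq_one_of_ne hab
    have hN' : ∀ c ∈ N, hammingDist z b < hammingDist z c := fun c hc =>
      hammingDist_lt_of_add_eq (by omega) (hN c hc)
    have hz : f z = true := hPN.eq_true_of_forall_lt hb hN'
    have hadj : G.Adj ⟨a, ha⟩ ⟨z, hz⟩ := (hG _ _).2 haz
    exact hadj.reachable.trans (ih hz hN' (by omega))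

end IsBNN

/-- any BNN representation of f has a positive prototype in each
connected component of the subgraph of the hypercube induced by the models of f,
hence at least as many positive prototypes as components. -/
theorem bnn_positive_prototype_per_component (n : ℕ)
    (f : (Fin n → Bool) → Bool)
    (G : SimpleGraph {x : Fin n → Bool // f x = true})
    (hG : ∀ a b, G.Adj a b ↔ hammingDist a.1 b.1 = 1)
    (P N : Finset (Fin n → Bool)) (hPN : IsBNN f P N) :
    (∀ C : G.ConnectedComponent,
      ∃ p, ∃ hp : f p = true, p ∈ P ∧ G.connectedComponentMk ⟨p, hp⟩ = C) ∧
    Nat.card G.ConnectedComponent ≤ P.card := by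
  have hcomp : ∀ C : G.ConnectedComponent,
      ∃ p, ∃ hp : f p = true, p ∈ P ∧ G.connectedComponentMk ⟨p, hp⟩ = C := by
    intro C
    obtain ⟨⟨a, ha⟩, rfl⟩ := C.exists_rep
    obtain ⟨b, hb, hN⟩ := hPN.2.1 a ha
    exact ⟨b, _, hb, (SimpleGraph.ConnectedComponent.sound
      (hPN.reachable_of_forall_lt hG ha hb hN)).symm⟩
  refine ⟨hcomp, ?_⟩
  have hsurj : Surjective fun p : P => G.connectedComponentMk ⟨p, hPN.eq_true_of_mem_pos p.2⟩ :=
    fun C => let ⟨p, _, hp, hC⟩ := hcomp C; ⟨⟨p, hp⟩, hC⟩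
  calc Nat.card G.ConnectedComponent ≤ Nat.card P := Nat.card_le_card_of_surjective _ hsurj
    _ = P.card := Nat.card_eq_finsetCard P
end

section
/- If x is a positive vector of a Boolean function f (i.e. f(x)=1) such that every vector at Hamming distance 1 from x satisfies f(y)=0, then x must belong to the set P of positive prototypes in any BNN representation (P,N) of f. -/
section HammingUpdate

open Finset Function

variable {ι : Type*} [Fintype ι] [DecidableEq ι] {β : ι → Type*} [∀ i, DecidableEq (β i)]

theorem hammingDist_update_self_right (x : ∀ i, β i) (i : ι) {a : β i} (h : x i ≠ a) :
    hammingDist x (update x i a) = 1 := by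
  rw [hammingDist, card_eq_one]
  refine ⟨i, ?_⟩
  ext j
  by_cases hj : j = i
  · subst hj
    simpa using h
  · simp [hj]

theorem hammingDist_update_apply_add_one (x y : ∀ i, β i) {i : ι} (h : x i ≠ y i) :
    hammingDist (update x i (y i)) y + 1 = hammingDist x y := by
  have hfilter : ({j | update x i (y i) j ≠ y j} : Finset ι) =
      ({j | x j ≠ y j} : Finset ι).erase i := by
    ext j
    by_cases hj : j = i
    · subst hj
      simp
    · simp [hj]
  rw [hammingDist, hammingDist, hfilter, card_erase_add_one (by simpa using h)]

theorem exists_hammingDist_eq_one_and_add_one {x y : ∀ i, β i} (hxy : x ≠ y) :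
    ∃ z, hammingDist x z = 1 ∧ hammingDist z y + 1 = hammingDist x y := by
  obtain ⟨i, hi⟩ := ne_iff.mp hxy
  exact ⟨update x i (y i), hammingDist_update_self_right x i hi,
    hammingDist_update_apply_add_one x y hi⟩

end HammingUpdate

theorem IsBNN.exists_hammingDist_eq_one_of_notMem {n : ℕ} {f : (Fin n → Bool) → Bool}
    {P N : Finset (Fin n → Bool)} (hPN : IsBNN f P N) {x : Fin n → Bool} (hx : f x = true)
    (hxP : x ∉ P) : ∃ z, hammingDist x z = 1 ∧ f z = true := by
  obtain ⟨b, hbP, hb⟩ := hPN.2.1 x hx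
  obtain ⟨z, hxz, hzb⟩ :=
    exists_hammingDist_eq_one_and_add_one (ne_of_mem_of_not_mem hbP hxP).symm
  refine ⟨z, hxz, ?_⟩
  by_contra hz
  obtain ⟨c, hcN, hc⟩ := hPN.2.2 z (Bool.eq_false_iff.mpr hz)
  have hxc : hammingDist x c ≤ hammingDist x z + hammingDist z c := hammingDist_triangle x z c
  have hxb : hammingDist x b < hammingDist x c := hb c hcN
  have hzc : hammingDist z c < hammingDist z b := hc b hbP
  omega

/-- an isolated positive vector of f must be a positive prototype
in any BNN representation of f. -/
theorem isolated_model_mem_positive_prototypes (n : ℕ)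
    (f : (Fin n → Bool) → Bool) (x : Fin n → Bool)
    (hx : f x = true)
    (hiso : ∀ y : Fin n → Bool, hammingDist x y = 1 → f y = false)
    (P N : Finset (Fin n → Bool)) (hPN : IsBNN f P N) :
    x ∈ P := by
  by_contra hxP
  obtain ⟨z, hxz, hz⟩ := hPN.exists_hammingDist_eq_one_of_notMem hx hxP
  simp [hiso z hxz] at hz
end

section
/- For Boolean vectors q, q', x in {0,1}^n, suppose q' agrees with x on the first k coordinates and agrees with q on the last n-k coordinates, and x agrees with q' on the first k coordinates. If d_H(p, q') < d_H(q, q') for some vector p, then d_H(p, x) < d_H(q, x). (Projection lemma underlying the implicant-check algorithm.) -/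
/-! Projecting `q` onto the subcube of vectors agreeing with `x` on the first `k` coordinates
gives a point `q'` lying on a Hamming geodesic from `q` to `x`, i.e.
`d(q, x) = d(q, q') + d(q', x)`. The triangle inequality through `q'` then turns
`d(p, q') < d(q, q')` into `d(p, x) < d(q, x)`. -/

section

variable {ι : Type*} [Fintype ι] {β : Type*} [DecidableEq β]

theorem hammingDist_eq_add_of_forall_eq_or_eq {x y z : ι → β}
    (h : ∀ i, y i = x i ∨ y i = z i) :
    hammingDist x z = hammingDist x y + hammingDist y z := by
  simp only [hammingDist, Finset.card_filter, ← Finset.sum_add_distrib]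
  refine Finset.sum_congr rfl fun i _ => ?_
  rcases h i with hy | hy <;> simp [hy]

theorem hammingDist_lt_of_eq_add {p x y z : ι → β}
    (hxz : hammingDist x z = hammingDist x y + hammingDist y z)
    (hp : hammingDist p y < hammingDist x y) :
    hammingDist p z < hammingDist x z :=
  calc hammingDist p z ≤ hammingDist p y + hammingDist y z := hammingDist_triangle p y z
    _ < hammingDist x y + hammingDist y z := by omega
    _ = hammingDist x z := hxz.symm

end

/-- projection lemma: if q' agrees with x on the first k
coordinates and with q on the remaining coordinates, then any vector p that is
strictly Hamming-closer to q' than q is also strictly Hamming-closer to x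
than q. -/
theorem projection_lemma (n k : ℕ) (q q' x p : Fin n → Bool)
    (h1 : ∀ i : Fin n, (i : ℕ) < k → q' i = x i)
    (h2 : ∀ i : Fin n, k ≤ (i : ℕ) → q' i = q i)
    (hp : hammingDist p q' < hammingDist q q') :
    hammingDist p x < hammingDist q x := by
  have q'_between : ∀ i, q' i = q i ∨ q' i = x i := fun i =>
    (lt_or_ge (i : ℕ) k).elim (fun hi => .inr (h1 i hi)) (fun hi => .inl (h2 i hi))
  exact hammingDist_lt_of_eq_add (hammingDist_eq_add_of_forall_eq_or_eq q'_between) hp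
end
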